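/- Let A_R > 0, A_T > 0, β_R > 0, β_T > 0, B_R > 0, B_T > 0 and r > 0, and suppose R > 0 satisfies the rate-balance equation (B_R/2)·log₂(1 + A_R·r^{−β_R}) = (B_T/2)·log₂(1 + A_T·exp(−β_T R)/R²). Then, with D = (1 + A_R·r^{−β_R})^{B_R/B_T} − 1 (which is strictly positive), R satisfies (β_T R/2)·exp(β_T R/2) = (β_T/2)·(A_T/D)^{1/2}; equivalently R = (2/β_T)·𝒲((β_T/2)·(D/A_T)^{−1/2}), where 𝒲 is the inverse of m ↦ m e^m on [0, ∞). -/

import Mathlib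

/-!
Equal rates force `(1 + A_R r^{-β_R})^{B_R/B_T} = 1 + A_T e^{-β_T R}/R²`, so `D` is exactly the
THz SNR and `A_T / D = (R e^{β_T R/2})²`. Taking square roots gives the equation for
`m = β_T R/2`, and since `m ↦ m e^m` is injective on `[0, ∞)`, any inverse `𝒲` returns this `m`.
-/

open Real

theorem strictMonoOn_mul_exp : StrictMonoOn (fun x : ℝ => x * exp x) (Set.Ici 0) :=
  fun a ha _ _ hab => mul_lt_mul'' hab (exp_lt_exp.2 hab) ha (exp_pos a).le

theorem rpow_div_eq_of_mul_logb_eq {b p q x y : ℝ} (hb : 1 < b) (hq : q ≠ 0) (hx : 0 < x)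
    (hy : 0 < y) (h : p * logb b x = q * logb b y) : x ^ (p / q) = y := by
  refine logb_injOn_pos hb (rpow_pos_of_pos hx _) hy ?_
  rw [logb_rpow_eq_mul_logb_of_pos hx]
  field_simp
  linarith

theorem rpow_half_div_mul_exp_neg_div_sq {A β R : ℝ} (hA : A ≠ 0) (hR : 0 ≤ R) :
    (A / (A * exp (-β * R) / R ^ 2)) ^ ((1 : ℝ) / 2) = R * exp (β * R / 2) := by
  have hsq : A / (A * exp (-β * R) / R ^ 2) = (R * exp (β * R / 2)) ^ 2 := by
    rw [mul_pow, ← exp_nat_mul, div_div_eq_mul_div, mul_div_mul_left _ _ hA, neg_mul,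
      exp_neg]
    field_simp
    norm_num
  rw [hsq, ← sqrt_eq_rpow, sqrt_sq (by positivity)]

theorem critical_distance_R2T_general (AR AT βR βT BR BT r R : ℝ)
    (hAR : 0 < AR) (hAT : 0 < AT) (hβT : 0 < βT)
    (hBT : 0 < BT) (hr : 0 < r) (hR : 0 < R)
    (hbal : BR / 2 * Real.logb 2 (1 + AR * r ^ (-βR)) =
        BT / 2 * Real.logb 2 (1 + AT * Real.exp (-βT * R) / R ^ 2)) :
    0 < (1 + AR * r ^ (-βR)) ^ (BR / BT) - 1 ∧
      βT * R / 2 * Real.exp (βT * R / 2) =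
        βT / 2 * (AT / ((1 + AR * r ^ (-βR)) ^ (BR / BT) - 1)) ^ ((1:ℝ) / 2) ∧
      ∀ W : ℝ → ℝ, (∀ y : ℝ, 0 ≤ y → 0 ≤ W y ∧ W y * Real.exp (W y) = y) →
        R = 2 / βT *
          W (βT / 2 * (((1 + AR * r ^ (-βR)) ^ (BR / BT) - 1) / AT) ^ (-(1:ℝ) / 2)) := by
  have hsnr : 0 < AT * exp (-βT * R) / R ^ 2 := by positivity
  have hD : (1 + AR * r ^ (-βR)) ^ (BR / BT) - 1 = AT * exp (-βT * R) / R ^ 2 := by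
    have hrate : (1 + AR * r ^ (-βR)) ^ (BR / BT) = 1 + AT * exp (-βT * R) / R ^ 2 :=
      rpow_div_eq_of_mul_logb_eq one_lt_two hBT.ne' (by positivity) (by positivity)
        (by linear_combination 2 * hbal)
    linarith
  have hfixed : βT * R / 2 * exp (βT * R / 2) =
      βT / 2 * (AT / (AT * exp (-βT * R) / R ^ 2)) ^ ((1 : ℝ) / 2) := by
    rw [rpow_half_div_mul_exp_neg_div_sq hAT.ne' hR.le]
    ring
  refine ⟨hD ▸ hsnr, hD ▸ hfixed, fun W hW => ?_⟩
  rw [hD, neg_div, rpow_neg (div_pos hsnr hAT).le, ← inv_rpow (div_pos hsnr hAT).le, inv_div,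
    ← hfixed]
  have hm : 0 ≤ βT * R / 2 := by positivity
  obtain ⟨hW0, hWeq⟩ := hW (βT * R / 2 * exp (βT * R / 2)) (by positivity)
  rw [strictMonoOn_mul_exp.injOn hW0 hm hWeq]
  field_simp

/-- Characterization of the critical distance `R_{R2T}(r)` (Lemma 3 of the paper): if a
THz relay at distance `R` provides the same average achievable rate as an RF relay at
distance `r`, then with `D = (1 + A_R r^{−β_R})^{B_R/B_T} − 1 > 0`, `R` satisfies
`(β_T R/2)·e^{β_T R/2} = (β_T/2)·(A_T/D)^{1/2}`; equivalently
`R = (2/β_T)·𝒲((β_T/2)·(D/A_T)^{−1/2})` for any function `𝒲` inverse to `m ↦ m·e^m`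
on the nonnegative reals. -/
theorem critical_distance_R2T (AR AT βR βT BR BT r R : ℝ)
    (hAR : 0 < AR) (hAT : 0 < AT) (hβR : 0 < βR) (hβT : 0 < βT)
    (hBR : 0 < BR) (hBT : 0 < BT) (hr : 0 < r) (hR : 0 < R)
    (hbal : BR / 2 * Real.logb 2 (1 + AR * r ^ (-βR)) =
        BT / 2 * Real.logb 2 (1 + AT * Real.exp (-βT * R) / R ^ 2)) :
    0 < (1 + AR * r ^ (-βR)) ^ (BR / BT) - 1 ∧
      βT * R / 2 * Real.exp (βT * R / 2) =
        βT / 2 * (AT / ((1 + AR * r ^ (-βR)) ^ (BR / BT) - 1)) ^ ((1:ℝ) / 2) ∧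
      ∀ W : ℝ → ℝ, (∀ y : ℝ, 0 ≤ y → 0 ≤ W y ∧ W y * Real.exp (W y) = y) →
        R = 2 / βT *
          W (βT / 2 * (((1 + AR * r ^ (-βR)) ^ (BR / BT) - 1) / AT) ^ (-(1:ℝ) / 2)) :=
  critical_distance_R2T_general AR AT βR βT BR BT r R hAR hAT hβT hBT hr hR hbal
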